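/- With c_m = 3^m 2^{m(m-1)/2}, p_m(y) = 4^{#{i:y_i=0}}/(6^m 2^{m(m-1)/2}), 𝓤 the set of pairs (o,r) ∈ {0,1,2}^m × {0,1}^𝓘 not both zero, and C_{m,o} = Σ_{y∈{-√3,0,√3}^m} c_m 2^{m(m-1)/2} [p_m(y) ∏_i H_{o_i}(y_i)]², it holds that Σ_{(o,r)∈𝓤} C_{m,o} = c_m − (3/2)^m. -/

import Mathlib

open Finset

/-!
The inner sum over `y` factorizes over the coordinates: `p_m(y)` is, up to the constant
`6^{-m} 2^{-m(m-1)/2}`, the product of the weights `4` (at `yᵢ = 0`) and `1` (at `yᵢ = ±√3`), so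
`C_{m,o} = ∏ᵢ μ(oᵢ)` with `μ(k) = (1/12) ∑_t (w(t) H_k(t))²`, i.e. `μ = (3/2, 1/2, 1)`.
Summing over `o` gives `(3/2 + 1/2 + 1)^m = 3^m`, each `o` occurs with `2^{|𝓘|}` choices of `r`,
and removing `(0,0)` subtracts `μ(0)^m = (3/2)^m`.
-/

/-- The index set `𝓘 = {(k,l) : 1 ≤ k < l ≤ m}`. -/
abbrev pairIdx (m : ℕ) := {p : Fin m × Fin m // p.1 < p.2}

/-- The first three normalized Hermite polynomials. -/
noncomputable def hermiteH : Fin 3 → ℝ → ℝ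
  | 0 => fun _ => 1
  | 1 => fun x => x
  | 2 => fun x => (x ^ 2 - 1) / Real.sqrt 2

lemma pow_card_filter_eq_prod {ι M : Type*} [Fintype ι] [CommMonoid M] (p : ι → Prop)
    [DecidablePred p] (a : M) :
    a ^ #{i | p i} = ∏ i, if p i then a else 1 := by
  rw [← prod_const, prod_filter]

lemma card_pairIdx (m : ℕ) : Fintype.card (pairIdx m) = m * (m - 1) / 2 := by
  rw [Fintype.card_subtype, Fintype.card_product_filter_lt, Fintype.card_fin,
    Nat.choose_two_right]

noncomputable def hermiteMass : Fin 3 → ℝ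
  | 0 => 3 / 2
  | 1 => 1 / 2
  | 2 => 1

lemma sum_hermiteMass : ∑ k, hermiteMass k = 3 := by
  norm_num [Fin.sum_univ_three, hermiteMass]

lemma sum_sq_hermiteH_threePoint (k : Fin 3) :
    ∑ t ∈ ({-Real.sqrt 3, 0, Real.sqrt 3} : Finset ℝ),
      ((if t = 0 then 4 else 1) * hermiteH k t) ^ 2 / 12 = hermiteMass k := by
  have h3 : 0 < Real.sqrt 3 := by positivity
  have hsq3 : Real.sqrt 3 ^ 2 = 3 := Real.sq_sqrt (by norm_num)
  have hsq2 : Real.sqrt 2 ^ 2 = 2 := Real.sq_sqrt (by norm_num)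
  rw [sum_insert (by simp [h3.ne']; linarith), sum_insert (by simp [h3.ne]), sum_singleton]
  fin_cases k <;>
    simp [hermiteH, hermiteMass, h3.ne', mul_pow, div_pow, neg_div, hsq2, hsq3] <;> norm_num

lemma Cmo_eq_prod_hermiteMass (m : ℕ) (o : Fin m → Fin 3) :
    ∑ y ∈ Fintype.piFinset (fun _ : Fin m => ({-Real.sqrt 3, 0, Real.sqrt 3} : Finset ℝ)),
        ((3 : ℝ) ^ m * (2 : ℝ) ^ (m * (m - 1) / 2)) * (2 : ℝ) ^ (m * (m - 1) / 2) *
          (((4 : ℝ) ^ (Finset.univ.filter (fun i => y i = 0)).card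
              / ((6 : ℝ) ^ m * (2 : ℝ) ^ (m * (m - 1) / 2)))
            * ∏ i, hermiteH (o i) (y i)) ^ 2
      = ∏ i, hermiteMass (o i) := by
  set P := m * (m - 1) / 2
  have summand_eq (y : Fin m → ℝ) :
      (3 : ℝ) ^ m * 2 ^ P * 2 ^ P *
          ((4 : ℝ) ^ #{i | y i = 0} / (6 ^ m * 2 ^ P) * ∏ i, hermiteH (o i) (y i)) ^ 2
        = ∏ i, ((if y i = 0 then 4 else 1) * hermiteH (o i) (y i)) ^ 2 / 12 := by
    rw [pow_card_filter_eq_prod, prod_div_distrib, prod_pow, prod_mul_distrib, prod_const,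
      card_univ, Fintype.card_fin, show (6 : ℝ) ^ m = 2 ^ m * 3 ^ m by rw [← mul_pow]; norm_num,
      show (12 : ℝ) ^ m = 2 ^ m * 2 ^ m * 3 ^ m by rw [← mul_pow, ← mul_pow]; norm_num]
    field_simp
  simp_rw [summand_eq]
  rw [← prod_univ_sum (fun _ => {-Real.sqrt 3, 0, Real.sqrt 3})
    (fun i t => ((if t = 0 then 4 else 1) * hermiteH (o i) t) ^ 2 / 12)]
  simp_rw [sum_sq_hermiteH_threePoint]

theorem sum_Cmo_over_U_general (m : ℕ) :
    ∑ p ∈ ((Finset.univ : Finset ((Fin m → Fin 3) × (pairIdx m → Fin 2)))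
        \ {((0 : Fin m → Fin 3), (0 : pairIdx m → Fin 2))}),
      (∑ y ∈ Fintype.piFinset (fun _ : Fin m => ({-Real.sqrt 3, 0, Real.sqrt 3} : Finset ℝ)),
        ((3 : ℝ) ^ m * (2 : ℝ) ^ (m * (m - 1) / 2)) * (2 : ℝ) ^ (m * (m - 1) / 2) *
          (((4 : ℝ) ^ (Finset.univ.filter (fun i => y i = 0)).card
              / ((6 : ℝ) ^ m * (2 : ℝ) ^ (m * (m - 1) / 2)))
            * ∏ i, hermiteH (p.1 i) (y i)) ^ 2)
      = (3 : ℝ) ^ m * (2 : ℝ) ^ (m * (m - 1) / 2) - (3 / 2 : ℝ) ^ m := by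
  rw [sum_sdiff_eq_sub (subset_univ _), sum_singleton]
  simp only [Cmo_eq_prod_hermiteMass]
  simp only [Fintype.sum_prod_type, sum_const, card_univ,
    Fintype.card_fun, Fintype.card_fin, card_pairIdx, nsmul_eq_mul, ← mul_sum,
    ← Fintype.prod_sum, sum_hermiteMass, prod_const, Pi.zero_apply]
  push_cast [hermiteMass]
  ring

/-- With `c_m = 3^m 2^{m(m-1)/2}`, `p_m(y) = 4^{#{i : yᵢ = 0}}/(6^m 2^{m(m-1)/2})`,
`𝓤` the set of pairs `(o,r) ∈ {0,1,2}^m × {0,1}^𝓘` not both zero, and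
`C_{m,o} = ∑_{y ∈ {-√3,0,√3}^m} c_m 2^{m(m-1)/2} [p_m(y) ∏ᵢ H_{oᵢ}(yᵢ)]²`,
one has `∑_{(o,r) ∈ 𝓤} C_{m,o} = c_m − (3/2)^m`. -/
theorem sum_Cmo_over_U (m : ℕ) (hm : 1 ≤ m) :
    ∑ p ∈ ((Finset.univ : Finset ((Fin m → Fin 3) × (pairIdx m → Fin 2)))
        \ {((0 : Fin m → Fin 3), (0 : pairIdx m → Fin 2))}),
      (∑ y ∈ Fintype.piFinset (fun _ : Fin m => ({-Real.sqrt 3, 0, Real.sqrt 3} : Finset ℝ)),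
        ((3 : ℝ) ^ m * (2 : ℝ) ^ (m * (m - 1) / 2)) * (2 : ℝ) ^ (m * (m - 1) / 2) *
          (((4 : ℝ) ^ (Finset.univ.filter (fun i => y i = 0)).card
              / ((6 : ℝ) ^ m * (2 : ℝ) ^ (m * (m - 1) / 2)))
            * ∏ i, hermiteH (p.1 i) (y i)) ^ 2)
      = (3 : ℝ) ^ m * (2 : ℝ) ^ (m * (m - 1) / 2) - (3 / 2 : ℝ) ^ m :=
  sum_Cmo_over_U_general m
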